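/- Let k be a field, K a field extension of k, A a k-algebra, and ℓ, m positive integers. Suppose ρ : A → E_{(ℓ,m)}(K) is a representation that is semisimple, and Q ∈ M_{ℓ+m}(K) is an invertible matrix such that Q E_{(ℓ,m)}(K) Q⁻¹ ⊆ E_{(ℓ,m)}(K). Then SupDiag_{ℓ+m} ∉ Q (Kρ(A)) Q⁻¹. -/
import Mathlib


open Matrix

noncomputable section

/-- The `n × n` matrix with `1`s on the superdiagonal and `0`s elsewhere. -/
def supDiag (K : Type*) [Semiring K] (n : ℕ) : Matrix (Fin n) (Fin n) K :=
  Matrix.of fun i j => if (i : ℕ) + 1 = (j : ℕ) then 1 else 0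

/-- The `n × n` matrix with `1`s on the subdiagonal and `0`s elsewhere. -/
def subDiag (K : Type*) [Semiring K] (n : ℕ) : Matrix (Fin n) (Fin n) K :=
  (supDiag K n).transpose

/-- Block index function for the `(ℓ, m)` block decomposition of `Fin (ℓ + m)`. -/
def blkIdx (ℓ m : ℕ) (i : Fin (ℓ + m)) : ℕ := if (i : ℕ) < ℓ then 0 else 1

/-- `E_{(ℓ,m)}(K)`: the `K`-subalgebra of `M_{ℓ+m}(K)` of block upper triangular
matrices `[[a, b], [0, c]]` with `a ∈ M_ℓ(K)`, `b ∈ M_{ℓ×m}(K)`, `c ∈ M_m(K)`. -/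
def Eblk (K : Type*) [CommRing K] (ℓ m : ℕ) :
    Subalgebra K (Matrix (Fin (ℓ + m)) (Fin (ℓ + m)) K) where
  carrier := { M | M.BlockTriangular (blkIdx ℓ m) }
  mul_mem' ha hb := ha.mul hb
  add_mem' ha hb := ha.add hb
  one_mem' := Matrix.blockTriangular_one
  algebraMap_mem' r := fun i j hij => by
    rw [Matrix.algebraMap_matrix_apply, if_neg]
    rintro rfl
    exact lt_irrefl _ hij

/-- `T_{(ℓ,m)}(K)`: the set of block matrices `[[0, b], [0, 0]]` with `b ∈ M_{ℓ×m}(K)`. -/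
def Tblk (K : Type*) [Semiring K] (ℓ m : ℕ) : Set (Matrix (Fin (ℓ + m)) (Fin (ℓ + m)) K) :=
  { M | ∀ i j : Fin (ℓ + m), ¬((i : ℕ) < ℓ ∧ ℓ ≤ (j : ℕ)) → M i j = 0 }

/-- `π_ℓ`: the upper-left `ℓ × ℓ` block of an `(ℓ+m) × (ℓ+m)` matrix. -/
def blkL (K : Type*) [Semiring K] (ℓ m : ℕ) (M : Matrix (Fin (ℓ + m)) (Fin (ℓ + m)) K) :
    Matrix (Fin ℓ) (Fin ℓ) K :=
  Matrix.of fun i j => M (Fin.castAdd m i) (Fin.castAdd m j)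

/-- `π_m`: the lower-right `m × m` block of an `(ℓ+m) × (ℓ+m)` matrix. -/
def blkR (K : Type*) [Semiring K] (ℓ m : ℕ) (M : Matrix (Fin (ℓ + m)) (Fin (ℓ + m)) K) :
    Matrix (Fin m) (Fin m) K :=
  Matrix.of fun i j => M (Fin.natAdd ℓ i) (Fin.natAdd ℓ j)

/-- The block matrix `I_ℓ = [[1, 0], [0, 0]]` inside `M_{ℓ+m}(K)`. -/
def idL (K : Type*) [Semiring K] (ℓ m : ℕ) : Matrix (Fin (ℓ + m)) (Fin (ℓ + m)) K :=
  Matrix.of fun i j => if i = j ∧ (i : ℕ) < ℓ then 1 else 0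

section AuxSupDiag
variable (K : Type*) [Field K]

lemma supDiag_pow (n p : ℕ) :
    (supDiag K n) ^ p = Matrix.of fun i j : Fin n => if (i : ℕ) + p = (j : ℕ) then 1 else 0 := by
  induction p with
  | zero =>
    ext i j
    simp [Matrix.one_apply, Fin.ext_iff]
  | succ p ih =>
    ext i j
    rw [pow_succ, ih]
    simp only [Matrix.mul_apply, Matrix.of_apply, supDiag, ite_mul, one_mul, zero_mul]
    by_cases h : (i : ℕ) + (p + 1) = (j : ℕ)
    · have hk : (i : ℕ) + p < n := by omega
      rw [Finset.sum_eq_single (⟨(i : ℕ) + p, hk⟩ : Fin n)]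
      · simp only [Fin.val_mk]
        rw [if_pos trivial, if_pos (show (i : ℕ) + p + 1 = (j : ℕ) by omega), if_pos h]
      · intro b _ hb
        rw [if_neg fun hc => hb (Fin.ext hc.symm)]
      · intro hmem; exact absurd (Finset.mem_univ _) hmem
    · rw [if_neg h]
      apply Finset.sum_eq_zero
      intro b _
      split_ifs with h1 h2
      · exact absurd (by omega : (i : ℕ) + (p + 1) = (j : ℕ)) h
      · rfl
      · rfl

lemma supDiag_pow_self (n : ℕ) : (supDiag K n) ^ n = 0 := by
  rw [supDiag_pow]
  ext i j
  have hj := j.isLt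
  simp only [Matrix.of_apply, Matrix.zero_apply, ite_eq_right_iff]
  intro h
  exact absurd h (by omega)

lemma supDiag_pow_pred_ne_zero (n : ℕ) (hn : 0 < n) : (supDiag K n) ^ (n - 1) ≠ 0 := by
  intro h
  rw [supDiag_pow] at h
  have := congrFun (congrFun h ⟨0, hn⟩) ⟨n - 1, by omega⟩
  simp only [Matrix.of_apply, Matrix.zero_apply, Fin.val_mk] at this
  rw [if_pos (by omega)] at this
  exact one_ne_zero this

end AuxSupDiag

section AuxNilp
variable {K : Type*} [Field K]

open Polynomial in
lemma pow_card_eq_zero_of_isNilpotent {n : Type*} [DecidableEq n] [Fintype n]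
    (M : Matrix n n K) (h : IsNilpotent M) : M ^ (Fintype.card n) = 0 := by
  have h2 := Matrix.isNilpotent_charpoly_sub_pow_of_isNilpotent h
  have h3 : M.charpoly = X ^ Fintype.card n := by
    rw [← sub_eq_zero]; exact h2.eq_zero
  have h4 := M.aeval_self_charpoly
  rw [h3] at h4
  simpa using h4

end AuxNilp

section AuxSS

lemma semisimple_sandwich_zero {R : Type*} [Ring R] [IsSemisimpleRing R]
    (s : R) (h : ∀ x : R, s * x * s = 0) : s = 0 := by
  set I : Submodule R R := Submodule.span R {s} with hI
  obtain ⟨J, hJ⟩ := exists_isCompl I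
  have h1 : (1 : R) ∈ I ⊔ J := by rw [hJ.sup_eq_top]; trivial
  obtain ⟨e, he, f, hf, hef⟩ := Submodule.mem_sup.mp h1
  have key : ∀ x ∈ I, x * e = x := by
    intro x hx
    have hx1 : x * e + x * f = x := by rw [← mul_add, hef, mul_one]
    have h2 : x - x * e ∈ I := sub_mem hx (by simpa using I.smul_mem x he)
    have h3 : x - x * e ∈ J := by
      have : x - x * e = x * f := by rw [sub_eq_iff_eq_add']; exact hx1.symm
      rw [this]; simpa using J.smul_mem x hf
    have := Submodule.disjoint_def.mp hJ.disjoint _ h2 h3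
    exact (sub_eq_zero.mp this).symm
  obtain ⟨a, ha⟩ := Submodule.mem_span_singleton.mp he
  have hes : e = a * s := by rw [← ha]; rfl
  have he0 : e = 0 := by
    have h1 := key e he
    rw [hes] at h1 ⊢
    calc a * s = a * s * (a * s) := h1.symm
      _ = a * (s * a * s) := by rw [mul_assoc, ← mul_assoc s a s]
      _ = 0 := by rw [h a, mul_zero]
  have := key s (Submodule.mem_span_singleton_self s)
  rw [he0, mul_zero] at this
  exact this.symm

end AuxSS

section AuxBlocks
variable {K : Type*} [Field K] {ℓ m : ℕ}

lemma blkIdx_castAdd (i : Fin ℓ) : blkIdx ℓ m (Fin.castAdd m i) = 0 := by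
  unfold blkIdx
  rw [if_pos (by simpa using i.isLt)]

lemma blkIdx_natAdd (i : Fin m) : blkIdx ℓ m (Fin.natAdd ℓ i) = 1 := by
  unfold blkIdx
  rw [if_neg (by simp)]

lemma blkL_mul (M N : Matrix (Fin (ℓ + m)) (Fin (ℓ + m)) K) (hN : N ∈ Eblk K ℓ m) :
    blkL K ℓ m (M * N) = blkL K ℓ m M * blkL K ℓ m N := by
  ext i j
  simp only [blkL, Matrix.of_apply, Matrix.mul_apply]
  rw [Fin.sum_univ_add]
  have hz : ∀ p : Fin m,
      M (Fin.castAdd m i) (Fin.natAdd ℓ p) * N (Fin.natAdd ℓ p) (Fin.castAdd m j) = 0 := by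
    intro p
    rw [hN (show blkIdx ℓ m (Fin.castAdd m j) < blkIdx ℓ m (Fin.natAdd ℓ p) by
      rw [blkIdx_castAdd, blkIdx_natAdd]; norm_num), mul_zero]
  simp [hz]

lemma blkR_mul (M N : Matrix (Fin (ℓ + m)) (Fin (ℓ + m)) K) (hM : M ∈ Eblk K ℓ m) :
    blkR K ℓ m (M * N) = blkR K ℓ m M * blkR K ℓ m N := by
  ext i j
  simp only [blkR, Matrix.of_apply, Matrix.mul_apply]
  rw [Fin.sum_univ_add]
  have hz : ∀ p : Fin ℓ,
      M (Fin.natAdd ℓ i) (Fin.castAdd m p) * N (Fin.castAdd m p) (Fin.natAdd ℓ j) = 0 := by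
    intro p
    rw [hM (show blkIdx ℓ m (Fin.castAdd m p) < blkIdx ℓ m (Fin.natAdd ℓ i) by
      rw [blkIdx_castAdd, blkIdx_natAdd]; norm_num), zero_mul]
  simp [hz]

lemma blkL_one : blkL K ℓ m 1 = 1 := by
  ext i j
  simp [blkL, Matrix.one_apply, Fin.ext_iff]

lemma blkR_one : blkR K ℓ m 1 = 1 := by
  ext i j
  simp [blkR, Matrix.one_apply, Fin.ext_iff]

lemma blkL_pow (M : Matrix (Fin (ℓ + m)) (Fin (ℓ + m)) K) (hM : M ∈ Eblk K ℓ m) (p : ℕ) :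
    blkL K ℓ m (M ^ p) = (blkL K ℓ m M) ^ p := by
  induction p with
  | zero => simpa using blkL_one
  | succ p ih => rw [pow_succ, pow_succ, blkL_mul _ _ hM, ih]

lemma blkR_pow (M : Matrix (Fin (ℓ + m)) (Fin (ℓ + m)) K) (hM : M ∈ Eblk K ℓ m) (p : ℕ) :
    blkR K ℓ m (M ^ p) = (blkR K ℓ m M) ^ p := by
  induction p with
  | zero => simpa using blkR_one
  | succ p ih => rw [pow_succ, pow_succ, blkR_mul _ _ (pow_mem hM p), ih]

lemma Tblk_mul_Tblk {s t : Matrix (Fin (ℓ + m)) (Fin (ℓ + m)) K}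
    (hs : s ∈ Tblk K ℓ m) (ht : t ∈ Tblk K ℓ m) : s * t = 0 := by
  ext i j
  rw [Matrix.mul_apply, Matrix.zero_apply]
  apply Finset.sum_eq_zero
  intro p _
  by_cases hp : (p : ℕ) < ℓ
  · rw [hs i p (by omega), zero_mul]
  · rw [ht p j (by omega), mul_zero]

lemma Eblk_mul_Tblk {x s : Matrix (Fin (ℓ + m)) (Fin (ℓ + m)) K}
    (hx : x ∈ Eblk K ℓ m) (hs : s ∈ Tblk K ℓ m) : x * s ∈ Tblk K ℓ m := by
  intro i j hij
  rw [Matrix.mul_apply]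
  apply Finset.sum_eq_zero
  intro p _
  by_cases hp : (p : ℕ) < ℓ
  · by_cases hj : ℓ ≤ (j : ℕ)
    · have hi : ¬ (i : ℕ) < ℓ := fun h => hij ⟨h, hj⟩
      rw [hx (show blkIdx ℓ m p < blkIdx ℓ m i by
        unfold blkIdx; rw [if_pos hp, if_neg hi]; norm_num), zero_mul]
    · rw [hs p j (by omega), mul_zero]
  · rw [hs p j (by omega), mul_zero]

lemma conj_unit_eq_zero {α : Type*} [Ring α] (u : αˣ) {x : α}
    (h : ↑u * x * ↑u⁻¹ = 0) : x = 0 := by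
  have := congrArg (fun y => (↑u⁻¹ : α) * y * (u : α)) h
  simpa [mul_assoc] using this

end AuxBlocks

/-- If `ρ : A → E_{(ℓ,m)}(K)` is semisimple and `Q E_{(ℓ,m)}(K) Q⁻¹ ⊆ E_{(ℓ,m)}(K)`
for an invertible `Q`, then `SupDiag_{ℓ+m} ∉ Q (Kρ(A)) Q⁻¹`. -/
theorem stmt5 (k K : Type*) [Field k] [Field K] [Algebra k K]
    (A : Type*) [Ring A] [Algebra k A] (ℓ m : ℕ) (hℓ : 0 < ℓ) (hm : 0 < m)
    (ρ : A →ₐ[k] Matrix (Fin (ℓ + m)) (Fin (ℓ + m)) K)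
    (hE : ∀ a, ρ a ∈ Eblk K ℓ m)
    (hss : IsSemisimpleRing (Algebra.adjoin K (Set.range ρ)))
    (Q : Matrix (Fin (ℓ + m)) (Fin (ℓ + m)) K) (hQ : IsUnit Q)
    (hQE : ∀ M ∈ Eblk K ℓ m, Q * M * Q⁻¹ ∈ Eblk K ℓ m) :
    supDiag K (ℓ + m) ∉
      (fun M => Q * M * Q⁻¹) ''
        (Algebra.adjoin K (Set.range ρ) : Set (Matrix (Fin (ℓ + m)) (Fin (ℓ + m)) K)) := by
  haveI := hss
  rintro ⟨M, hM, hMeq⟩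
  have hM' : M ∈ Algebra.adjoin K (Set.range ρ) := hM
  have hsubE : Algebra.adjoin K (Set.range ρ) ≤ Eblk K ℓ m :=
    Algebra.adjoin_le (by rintro _ ⟨a, rfl⟩; exact hE a)
  have hME : M ∈ Eblk K ℓ m := hsubE hM'
  set u := hQ.unit with hu
  have huQ : (u : Matrix (Fin (ℓ + m)) (Fin (ℓ + m)) K) = Q := hQ.unit_spec
  have hS : supDiag K (ℓ + m) =
      (u : Matrix (Fin (ℓ + m)) (Fin (ℓ + m)) K) * M * ((u⁻¹ :
        (Matrix (Fin (ℓ + m)) (Fin (ℓ + m)) K)ˣ) : Matrix (Fin (ℓ + m)) (Fin (ℓ + m)) K) := by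
    rw [← hMeq, Matrix.coe_units_inv, huQ]
  have hSp : ∀ p : ℕ, (supDiag K (ℓ + m)) ^ p =
      (u : Matrix (Fin (ℓ + m)) (Fin (ℓ + m)) K) * M ^ p * ((u⁻¹ :
        (Matrix (Fin (ℓ + m)) (Fin (ℓ + m)) K)ˣ) : Matrix (Fin (ℓ + m)) (Fin (ℓ + m)) K) := by
    intro p
    rw [hS, Units.conj_pow]
  -- M is nilpotent of order ≤ ℓ + m
  have hMn : M ^ (ℓ + m) = 0 := by
    apply conj_unit_eq_zero u
    rw [← hSp, supDiag_pow_self]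
  -- the diagonal blocks of M are nilpotent
  have hLl : (blkL K ℓ m M) ^ ℓ = 0 := by
    have hnil : IsNilpotent (blkL K ℓ m M) :=
      ⟨ℓ + m, by rw [← blkL_pow M hME, hMn]; ext i j; simp [blkL]⟩
    have := pow_card_eq_zero_of_isNilpotent _ hnil
    simpa [Fintype.card_fin] using this
  have hRm : (blkR K ℓ m M) ^ m = 0 := by
    have hnil : IsNilpotent (blkR K ℓ m M) :=
      ⟨ℓ + m, by rw [← blkR_pow M hME, hMn]; ext i j; simp [blkR]⟩
    have := pow_card_eq_zero_of_isNilpotent _ hnil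
    simpa [Fintype.card_fin] using this
  -- hence M ^ (ℓ + m - 1) lies in T
  set p1 := ℓ + m - 1 with hp1
  have hsE : M ^ p1 ∈ Eblk K ℓ m := pow_mem hME p1
  have hsLz : blkL K ℓ m (M ^ p1) = 0 := by
    rw [blkL_pow M hME, show p1 = ℓ + (m - 1) by omega, pow_add, hLl, zero_mul]
  have hsRz : blkR K ℓ m (M ^ p1) = 0 := by
    rw [blkR_pow M hME, show p1 = m + (ℓ - 1) by omega, pow_add, hRm, zero_mul]
  have hsT : M ^ p1 ∈ Tblk K ℓ m := by
    intro i j hij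
    by_cases hi : (i : ℕ) < ℓ
    · have hj : (j : ℕ) < ℓ := by
        by_contra hj
        exact hij ⟨hi, by omega⟩
      have hci : (Fin.castAdd m ⟨(i : ℕ), hi⟩ : Fin (ℓ + m)) = i := Fin.ext rfl
      have hcj : (Fin.castAdd m ⟨(j : ℕ), hj⟩ : Fin (ℓ + m)) = j := Fin.ext rfl
      have h0 := congrFun (congrFun hsLz ⟨(i : ℕ), hi⟩) ⟨(j : ℕ), hj⟩
      simp only [blkL, Matrix.of_apply, Matrix.zero_apply] at h0
      rwa [hci, hcj] at h0
    · by_cases hj : (j : ℕ) < ℓ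
      · exact hsE (show blkIdx ℓ m j < blkIdx ℓ m i by
          unfold blkIdx; rw [if_pos hj, if_neg hi]; norm_num)
      · have hi2 : (i : ℕ) - ℓ < m := by have := i.isLt; omega
        have hj2 : (j : ℕ) - ℓ < m := by have := j.isLt; omega
        have hci : (Fin.natAdd ℓ ⟨(i : ℕ) - ℓ, hi2⟩ : Fin (ℓ + m)) = i := Fin.ext (by simp; omega)
        have hcj : (Fin.natAdd ℓ ⟨(j : ℕ) - ℓ, hj2⟩ : Fin (ℓ + m)) = j := Fin.ext (by simp; omega)
        have h0 := congrFun (congrFun hsRz ⟨(i : ℕ) - ℓ, hi2⟩) ⟨(j : ℕ) - ℓ, hj2⟩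
        simp only [blkR, Matrix.of_apply, Matrix.zero_apply] at h0
        rwa [hci, hcj] at h0
  -- sandwich property in the semisimple subalgebra
  have hzero : ∀ x ∈ Eblk K ℓ m, M ^ p1 * x * M ^ p1 = 0 := by
    intro x hx
    rw [mul_assoc]
    exact Tblk_mul_Tblk hsT (Eblk_mul_Tblk hx hsT)
  set R := Algebra.adjoin K (Set.range ρ) with hR
  let s' : R := ⟨M ^ p1, pow_mem hM' p1⟩
  have hs' : ∀ x : R, s' * x * s' = 0 := by
    intro x
    apply Subtype.ext
    exact hzero (x : Matrix (Fin (ℓ + m)) (Fin (ℓ + m)) K) (hsubE x.2)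
  have hs0 : s' = 0 := semisimple_sandwich_zero s' hs'
  have hMp0 : M ^ p1 = 0 := congrArg Subtype.val hs0
  -- contradiction with supDiag ^ (ℓ + m - 1) ≠ 0
  refine supDiag_pow_pred_ne_zero K (ℓ + m) (by omega) ?_
  rw [hSp, ← hp1, hMp0, mul_zero, zero_mul]
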